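/- arXiv:1803.08140 — 5 statements merged into one kernel-verified Lean document; each statement's English description precedes it below -/
import Mathlib

section
/- Let n ≥ 1 and let λ = (λ_1, …, λ_n) and λ' = (λ'_1, …, λ'_n) be two distinct partitions of n. Then the polynomials Φ(λ; z) := ∏_{j=1}^n (1 − z^j)^{λ_j} and Φ(λ'; z) := ∏_{j=1}^n (1 − z^j)^{λ'_j} are distinct as polynomials in z. -/
open Polynomial

/-- `Φ(λ; z) = ∏_{j=1}^n (1 - z^j)^{λ_j}`, as a polynomial in `z` with integer
coefficients.  Here the partition `λ = (λ_1, …, λ_n)` is encoded as `l : Fin n → ℕ`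
with `l i = λ_{i+1}`. -/
noncomputable def Phi {n : ℕ} (l : Fin n → ℕ) : Polynomial ℤ :=
  ∏ i : Fin n, ((1 : Polynomial ℤ) - X ^ ((i : ℕ) + 1)) ^ l i

lemma phi_aux_pow (j a : ℕ) (hj : 1 ≤ j) :
    (X : ℤ[X]) ^ (j + 1) ∣ (1 - X ^ j) ^ a - (1 - C (a : ℤ) * X ^ j) := by
  induction a with
  | zero => simp
  | succ a ih =>
    have h2 : (X : ℤ[X]) ^ (j + 1) ∣ ((X : ℤ[X]) ^ j) ^ 2 := by
      rw [← pow_mul]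
      exact pow_dvd_pow _ (by omega)
    have key : ((1 : ℤ[X]) - X ^ j) ^ (a + 1) - (1 - C ((a : ℕ) + 1 : ℤ) * X ^ j)
        = (1 - X ^ j) * ((1 - X ^ j) ^ a - (1 - C (a : ℤ) * X ^ j))
          + C (a : ℤ) * ((X : ℤ[X]) ^ j) ^ 2 := by
      rw [map_add, map_one]
      ring
    have : (((a + 1 : ℕ) : ℤ)) = ((a : ℕ) + 1 : ℤ) := by push_cast; ring
    rw [this, key]
    exact dvd_add (Dvd.dvd.mul_left ih _) (Dvd.dvd.mul_left h2 _)

lemma phi_aux_high (j m a : ℕ) (hm : j + 1 ≤ m) :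
    (X : ℤ[X]) ^ (j + 1) ∣ (1 - X ^ m) ^ a - 1 := by
  have h1 : (X : ℤ[X]) ^ (j + 1) ∣ X ^ m := pow_dvd_pow _ hm
  have h2 : ((1 : ℤ[X]) - X ^ m) - 1 ∣ (1 - X ^ m) ^ a - 1 ^ a :=
    sub_dvd_pow_sub_pow _ _ a
  simp only [one_pow] at h2
  have h3 : ((1 : ℤ[X]) - X ^ m) - 1 = -(X ^ m) := by ring
  rw [h3, neg_dvd] at h2
  exact h1.trans h2

theorem stmt_10 (n : ℕ) (hn : 1 ≤ n) (l l' : Fin n → ℕ)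
    (hl : ∑ i : Fin n, ((i : ℕ) + 1) * l i = n)
    (hl' : ∑ i : Fin n, ((i : ℕ) + 1) * l' i = n)
    (hne : l ≠ l') :
    Phi l ≠ Phi l' := by
  classical
  intro heq
  have hex : ∃ i, l i ≠ l' i := Function.ne_iff.mp hne
  set s : Finset (Fin n) := Finset.univ.filter (fun i => l i ≠ l' i) with hs
  have hsne : s.Nonempty := ⟨hex.choose, by simp [hs, hex.choose_spec]⟩
  set k := s.min' hsne with hk
  have hkmem : k ∈ s := s.min'_mem hsne
  have hkne : l k ≠ l' k := by
    have := hkmem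
    simp only [hs, Finset.mem_filter] at this
    exact this.2
  have hlt : ∀ i : Fin n, i < k → l i = l' i := by
    intro i hi
    by_contra h
    exact absurd (s.min'_le i (by simp [hs, h])) (not_le.mpr hi)
  set j := (k : ℕ) + 1 with hj
  set I := Ideal.span {(X : ℤ[X]) ^ (j + 1)} with hI
  set π := Ideal.Quotient.mk I with hπ
  have hdvd_of : ∀ p q : ℤ[X], (X : ℤ[X]) ^ (j + 1) ∣ p - q → π p = π q := by
    intro p q h
    exact Ideal.Quotient.eq.mpr (Ideal.mem_span_singleton.mpr h)
  have hfK : ∀ a : ℕ, π ((1 - X ^ j) ^ a) = π (1 - C (a : ℤ) * X ^ j) :=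
    fun a => hdvd_of _ _ (phi_aux_pow j a (by omega))
  have hfG : ∀ (m a : ℕ), j + 1 ≤ m → π ((1 - X ^ m) ^ a) = 1 := by
    intro m a hm
    have := hdvd_of _ _ (phi_aux_high j m a hm)
    simpa using this
  set P : ℤ[X] := ∏ i ∈ Finset.univ.erase k, ((1 : ℤ[X]) - X ^ ((i : ℕ) + 1)) ^ l i with hP
  have hsplit : ∀ g : Fin n → ℕ, (∀ i, i ≠ k → π (((1 : ℤ[X]) - X ^ ((i : ℕ) + 1)) ^ g i)
        = π (((1 : ℤ[X]) - X ^ ((i : ℕ) + 1)) ^ l i)) →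
      π (Phi g) = π ((1 : ℤ[X]) - C (g k : ℤ) * X ^ j) * π P := by
    intro g hg
    have h1 : Phi g = ((1 : ℤ[X]) - X ^ ((k : ℕ) + 1)) ^ g k *
        ∏ i ∈ Finset.univ.erase k, ((1 : ℤ[X]) - X ^ ((i : ℕ) + 1)) ^ g i := by
      rw [Phi]
      exact (Finset.mul_prod_erase _ _ (Finset.mem_univ k)).symm
    rw [h1, map_mul, map_prod, map_prod]
    rw [show (k : ℕ) + 1 = j from rfl, hfK (g k)]
    congr 1
    apply Finset.prod_congr rfl
    intro i hi
    exact hg i (Finset.ne_of_mem_erase hi)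
  have hEl : π (Phi l) = π ((1 : ℤ[X]) - C (l k : ℤ) * X ^ j) * π P :=
    hsplit l (fun _ _ => rfl)
  have hEl' : π (Phi l') = π ((1 : ℤ[X]) - C (l' k : ℤ) * X ^ j) * π P := by
    apply hsplit l'
    intro i hik
    rcases lt_or_gt_of_ne hik with hlt' | hgt
    · rw [hlt i hlt']
    · have hm : j + 1 ≤ (i : ℕ) + 1 := by
        have : (k : ℕ) < (i : ℕ) := hgt
        omega
      rw [hfG _ (l' i) hm, hfG _ (l i) hm]
  -- from heq, deduce divisibility
  have hzero : π (((1 : ℤ[X]) - C (l k : ℤ) * X ^ j) * P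
      - ((1 : ℤ[X]) - C (l' k : ℤ) * X ^ j) * P) = 0 := by
    rw [map_sub, map_mul, map_mul, ← hEl, ← hEl', heq, sub_self]
  have hdvd : (X : ℤ[X]) ^ (j + 1) ∣
      ((1 : ℤ[X]) - C (l k : ℤ) * X ^ j) * P - ((1 : ℤ[X]) - C (l' k : ℤ) * X ^ j) * P := by
    rw [hπ, Ideal.Quotient.eq_zero_iff_mem, hI, Ideal.mem_span_singleton] at hzero
    exact hzero
  have heq2 : ((1 : ℤ[X]) - C (l k : ℤ) * X ^ j) * P - ((1 : ℤ[X]) - C (l' k : ℤ) * X ^ j) * P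
      = C ((l' k : ℤ) - (l k : ℤ)) * (X ^ j * P) := by
    rw [map_sub]
    ring
  rw [heq2] at hdvd
  obtain ⟨r, hr⟩ := hdvd
  have hc := congrArg (fun p : ℤ[X] => p.coeff j) hr
  simp only [coeff_C_mul] at hc
  have hXP : ((X : ℤ[X]) ^ j * P).coeff j = P.coeff 0 := by
    have := coeff_X_pow_mul P j 0
    simpa using this
  have hP0 : P.coeff 0 = 1 := by
    rw [coeff_zero_eq_eval_zero, hP, eval_prod]
    apply Finset.prod_eq_one
    intro i _
    simp
  have hR : ((X : ℤ[X]) ^ (j + 1) * r).coeff j = 0 := by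
    rw [coeff_X_pow_mul']
    simp
  rw [hXP, hP0, hR, mul_one, sub_eq_zero] at hc
  exact hkne (by exact_mod_cast hc.symm)
end

section
/- Let n ≥ 1 and let λ = (λ_1, …, λ_n) and λ' = (λ'_1, …, λ'_n) be two distinct partitions of n. Then the polynomials Σ(λ; z) := ∏_{j=1}^n (1 + z^j)^{λ_j} and Σ(λ'; z) := ∏_{j=1}^n (1 + z^j)^{λ'_j} are distinct as polynomials in z. Moreover, there exists ε_n > 0 (depending only on n) such that for all complex z with 0 < |z| < ε_n and all distinct partitions λ ≠ λ' of n, Σ(λ; z) ≠ Σ(λ'; z). -/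
open Polynomial

/-- `Σ(λ; z) = ∏_{j=1}^n (1 + z^j)^{λ_j}`, as a polynomial in `z` with integer
coefficients.  Here the partition `λ = (λ_1, …, λ_n)` is encoded as `l : Fin n → ℕ`
with `l i = λ_{i+1}`. -/
noncomputable def SigmaPol {n : ℕ} (l : Fin n → ℕ) : Polynomial ℤ :=
  ∏ i : Fin n, ((1 : Polynomial ℤ) + X ^ ((i : ℕ) + 1)) ^ l i

/-- `Σ(λ; z) = ∏_{j=1}^n (1 + z^j)^{λ_j}` evaluated at a complex number `z`. -/
noncomputable def SigmaEval {n : ℕ} (l : Fin n → ℕ) (z : ℂ) : ℂ :=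
  ∏ i : Fin n, (1 + z ^ ((i : ℕ) + 1)) ^ l i

section AuxStmt12
open Finset

lemma coeff_one_add_pow (j e m : ℕ) (hj : 1 ≤ j) (hm : m ≤ j) :
    (((1 : ℤ[X]) + X^j)^e).coeff m = if m = 0 then 1 else if m = j then (e:ℤ) else 0 := by
  induction e with
  | zero =>
      simp only [pow_zero, Polynomial.coeff_one, Nat.cast_zero]
      rcases eq_or_ne m 0 with h | h <;> simp [h, eq_comm]
  | succ e ih =>
      rw [pow_succ, mul_add, mul_one, Polynomial.coeff_add, ih,
        Polynomial.coeff_mul_X_pow']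
      rcases eq_or_ne m 0 with h | h
      · subst h
        have : ¬ (j ≤ 0) := by omega
        simp [this, (by omega : j ≠ 0)]
      · rcases eq_or_ne m j with h2 | h2
        · subst h2
          have h0 : (((1 : ℤ[X]) + X^m)^e).coeff 0 = 1 := by
            have := coeff_one_add_pow m e 0 hj (Nat.zero_le m)
            simpa using this
          simp only [h, h0, if_neg h, if_pos rfl, le_refl, if_pos, Nat.sub_self]
          push_cast; ring
        · have : ¬ (j ≤ m) := by omega
          simp [h, h2, this]

lemma coeff_prod_high (g : ℕ → ℕ) (k : ℕ) (s : Finset ℕ) (hs : ∀ j ∈ s, k < j) :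
    ∀ m ≤ k, (∏ j ∈ s, ((1:ℤ[X]) + X^j)^(g j)).coeff m = if m = 0 then 1 else 0 := by
  induction s using Finset.induction with
  | empty => intro m hm; simp [Polynomial.coeff_one, eq_comm]
  | @insert a s ha ih =>
      intro m hm
      have hak : k < a := hs a (mem_insert_self _ _)
      rw [Finset.prod_insert ha, Polynomial.coeff_mul]
      rw [Finset.sum_eq_single_of_mem (0, m) (by simp)]
      · have h0 : (((1:ℤ[X]) + X^a)^(g a)).coeff 0 = 1 := by
          have := coeff_one_add_pow a (g a) 0 (by omega) (Nat.zero_le a)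
          simpa using this
        rw [h0, one_mul, ih (fun j hj => hs j (mem_insert_of_mem hj)) m hm]
      · rintro ⟨x, y⟩ hxy hne
        have hx : x + y = m := by simpa using hxy
        have hx0 : x ≠ 0 := by
          intro h; apply hne; subst h
          have : y = m := by omega
          simp [this]
        have hcoeff : (((1:ℤ[X]) + X^a)^(g a)).coeff x = 0 := by
          have := coeff_one_add_pow a (g a) x (by omega) (by omega)
          rw [this, if_neg hx0, if_neg (by omega)]
        rw [hcoeff, zero_mul]

lemma coeff_prod_min (g : ℕ → ℕ) (k : ℕ) (hk : 1 ≤ k) (s : Finset ℕ)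
    (hs : ∀ j ∈ s, k < j) :
    ((((1:ℤ[X]) + X^k)^(g k)) * ∏ j ∈ s, ((1:ℤ[X]) + X^j)^(g j)).coeff k = (g k : ℤ) := by
  rw [Polynomial.coeff_mul]
  rw [Finset.sum_eq_single_of_mem (k, 0) (by simp)]
  · have h1 : (((1:ℤ[X]) + X^k)^(g k)).coeff k = (g k : ℤ) := by
      rw [coeff_one_add_pow k (g k) k hk le_rfl, if_neg (by omega), if_pos rfl]
    have h2 : (∏ j ∈ s, ((1:ℤ[X]) + X^j)^(g j)).coeff 0 = 1 := by
      have := coeff_prod_high g k s hs 0 (Nat.zero_le k)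
      simpa using this
    rw [h1, h2, mul_one]
  · rintro ⟨x, y⟩ hxy hne
    have hx : x + y = k := by simpa using hxy
    have hy0 : y ≠ 0 := by
      intro h; apply hne; subst h
      have : x = k := by omega
      simp [this]
    have : (∏ j ∈ s, ((1:ℤ[X]) + X^j)^(g j)).coeff y = 0 := by
      rw [coeff_prod_high g k s hs y (by omega), if_neg hy0]
    rw [this, mul_zero]

lemma one_add_X_pow_ne_zero (a : ℕ) (ha : 1 ≤ a) : ((1:ℤ[X]) + X^a) ≠ 0 := by
  intro h
  have := congrArg (fun p => Polynomial.coeff p 0) h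
  simp only [Polynomial.coeff_add, Polynomial.coeff_one, Polynomial.coeff_X_pow,
    Polynomial.coeff_zero] at this
  rw [if_pos trivial, if_neg (by omega)] at this
  norm_num at this

lemma inj_aux (s : Finset ℕ) (hs1 : ∀ j ∈ s, 1 ≤ j) (g g' : ℕ → ℕ)
    (h : (∏ j ∈ s, ((1:ℤ[X]) + X^j)^(g j)) = (∏ j ∈ s, ((1:ℤ[X]) + X^j)^(g' j))) :
    ∀ j ∈ s, g j = g' j := by
  induction s using Finset.induction_on_min with
  | empty => intro j hj; simp at hj
  | insert a s ha ih =>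
      have hanotin : a ∉ s := fun hmem => lt_irrefl a (ha a hmem)
      rw [Finset.prod_insert hanotin, Finset.prod_insert hanotin] at h
      have ha1 : 1 ≤ a := hs1 a (mem_insert_self _ _)
      have hga : g a = g' a := by
        have e1 := coeff_prod_min g a ha1 s ha
        have e2 := coeff_prod_min g' a ha1 s ha
        have := congrArg (fun p => Polynomial.coeff p a) h
        rw [e1, e2] at this
        exact_mod_cast this
      have hcancel : (∏ j ∈ s, ((1:ℤ[X]) + X^j)^(g j)) = ∏ j ∈ s, ((1:ℤ[X]) + X^j)^(g' j) := by
        rw [hga] at h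
        exact mul_left_cancel₀ (pow_ne_zero _ (one_add_X_pow_ne_zero a ha1)) h
      intro j hj
      rcases Finset.mem_insert.mp hj with rfl | hj'
      · exact hga
      · exact ih (fun x hx => hs1 x (mem_insert_of_mem hx)) hcancel j hj'

/-- extension of `l : Fin n → ℕ` to `ℕ`, indexed so that `extFun l j = λ_j`. -/
def extFun {n : ℕ} (l : Fin n → ℕ) (j : ℕ) : ℕ :=
  if h : 1 ≤ j ∧ j ≤ n then l ⟨j-1, by omega⟩ else 0

lemma extFun_succ {n : ℕ} (l : Fin n → ℕ) (i : Fin n) : extFun l ((i:ℕ)+1) = l i := by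
  have hcond : 1 ≤ (i:ℕ)+1 ∧ (i:ℕ)+1 ≤ n := ⟨by omega, by omega⟩
  rw [extFun, dif_pos hcond]
  exact congrArg l (Fin.ext (by simp))

lemma sigmaPol_eq_prod {n : ℕ} (l : Fin n → ℕ) :
    SigmaPol l = ∏ j ∈ Finset.Icc 1 n, ((1:ℤ[X]) + X^j)^(extFun l j) := by
  rw [show Finset.Icc 1 n = Finset.Ico 1 (n+1) by rw [Finset.Ico_add_one_right_eq_Icc],
    Finset.prod_Ico_eq_prod_range]
  simp only [Nat.add_sub_cancel]
  rw [← Fin.prod_univ_eq_prod_range (fun i => ((1:ℤ[X]) + X^(1+i))^(extFun l (1+i)))]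
  rw [SigmaPol]
  apply Finset.prod_congr rfl
  intro i _
  rw [add_comm 1 (i:ℕ), extFun_succ]

lemma sigmaPol_injective {n : ℕ} (l l' : Fin n → ℕ) (hne : l ≠ l') :
    SigmaPol l ≠ SigmaPol l' := by
  intro h
  rw [sigmaPol_eq_prod, sigmaPol_eq_prod] at h
  have key := inj_aux (Finset.Icc 1 n) (fun j hj => (Finset.mem_Icc.mp hj).1)
    (extFun l) (extFun l') h
  apply hne
  funext i
  have hmem : (i : ℕ) + 1 ∈ Finset.Icc 1 n := by
    rw [Finset.mem_Icc]; omega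
  have := key _ hmem
  rwa [extFun_succ, extFun_succ] at this

lemma aeval_sigmaPol {n : ℕ} (l : Fin n → ℕ) (z : ℂ) :
    Polynomial.aeval z (SigmaPol l) = SigmaEval l z := by
  rw [SigmaPol, SigmaEval, map_prod]
  apply Finset.prod_congr rfl
  intro i _
  rw [map_pow, map_add, map_one, map_pow, Polynomial.aeval_X]

end AuxStmt12

theorem stmt_12 (n : ℕ) (hn : 1 ≤ n) :
    (∀ l l' : Fin n → ℕ,
        (∑ i : Fin n, ((i : ℕ) + 1) * l i = n) →
        (∑ i : Fin n, ((i : ℕ) + 1) * l' i = n) →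
        l ≠ l' → SigmaPol l ≠ SigmaPol l') ∧
      ∃ ε : ℝ, 0 < ε ∧
        ∀ z : ℂ, 0 < ‖z‖ → ‖z‖ < ε →
          ∀ l l' : Fin n → ℕ,
            (∑ i : Fin n, ((i : ℕ) + 1) * l i = n) →
            (∑ i : Fin n, ((i : ℕ) + 1) * l' i = n) →
            l ≠ l' → SigmaEval l z ≠ SigmaEval l' z := by
  classical
  constructor
  · intro l l' _ _ hne
    exact sigmaPol_injective l l' hne
  · set Pf : Finset (Fin n → ℕ) := Fintype.piFinset (fun _ => Finset.range (n+1)) with hPf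
    set R : Finset ℂ := (Pf ×ˢ Pf).biUnion
      (fun p => (((SigmaPol p.1 - SigmaPol p.2).map
        (Int.castRingHom ℂ)).roots.toFinset)) with hR
    set V : Finset ℝ := (R.erase 0).image (fun w : ℂ => ‖w‖) with hV
    have hVpos : ∀ x ∈ V, 0 < x := by
      intro x hx
      rw [hV, Finset.mem_image] at hx
      obtain ⟨w, hw, rfl⟩ := hx
      have hw0 : w ≠ 0 := (Finset.mem_erase.mp hw).1
      simpa using hw0
    refine ⟨if h : V.Nonempty then V.min' h else 1, ?_, ?_⟩
    · split_ifs with h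
      · exact hVpos _ (V.min'_mem h)
      · norm_num
    · intro z hz0 hz l l' hl hl' hne heq
      -- z is a root of the difference polynomial
      have hPne : SigmaPol l - SigmaPol l' ≠ 0 :=
        sub_ne_zero.mpr (sigmaPol_injective l l' hne)
      have hmapne : (SigmaPol l - SigmaPol l').map (Int.castRingHom ℂ) ≠ 0 := by
        rw [Ne, Polynomial.map_eq_zero_iff (Int.cast_injective)]
        exact hPne
      have hroot : ((SigmaPol l - SigmaPol l').map (Int.castRingHom ℂ)).IsRoot z := by
        rw [Polynomial.IsRoot, Polynomial.eval_map, ← algebraMap_int_eq,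
          ← Polynomial.aeval_def]
        rw [map_sub, aeval_sigmaPol, aeval_sigmaPol, heq, sub_self]
      have hmemPf : ∀ (m : Fin n → ℕ), (∑ i : Fin n, ((i : ℕ) + 1) * m i = n) → m ∈ Pf := by
        intro m hm
        rw [hPf, Fintype.mem_piFinset]
        intro i
        rw [Finset.mem_range]
        have h1 : ((i : ℕ) + 1) * m i ≤ ∑ j : Fin n, ((j : ℕ) + 1) * m j :=
          Finset.single_le_sum (f := fun j : Fin n => ((j : ℕ) + 1) * m j)
            (fun j _ => Nat.zero_le _) (Finset.mem_univ i)
        rw [hm] at h1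
        have : m i ≤ ((i : ℕ) + 1) * m i := Nat.le_mul_of_pos_left _ (by omega)
        omega
      have hzR : z ∈ R := by
        rw [hR, Finset.mem_biUnion]
        refine ⟨(l, l'), Finset.mem_product.mpr ⟨hmemPf l hl, hmemPf l' hl'⟩, ?_⟩
        rw [Multiset.mem_toFinset, Polynomial.mem_roots hmapne]
        exact hroot
      have hzne : z ≠ 0 := by
        intro h; rw [h] at hz0; simp at hz0
      have habsV : ‖z‖ ∈ V := by
        rw [hV, Finset.mem_image]
        exact ⟨z, Finset.mem_erase.mpr ⟨hzne, hzR⟩, rfl⟩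
      have hVne : V.Nonempty := ⟨_, habsV⟩
      rw [dif_pos hVne] at hz
      exact absurd (V.min'_le _ habsV) (not_le.mpr hz)
end

section
/- Fix an integer r ≥ 2 and let n ≥ 1. With L(n) := log_2(2n^3), the sum Σ_A(n) := Σ p(λ)^r, taken over all partitions λ of n whose number of parts ω_n(λ) := Σ_j λ_j exceeds L(n), satisfies Σ_A(n) ≤ 1 / n^{3(r−1)}. -/
open scoped Classical

namespace Stmt13Aux

open Finset

/-- denominator of the weight of a multiset -/
def D (m : Multiset ℕ) : ℕ :=
  ∏ i ∈ m.toFinset, (i ^ m.count i * (m.count i).factorial)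

lemma D_pos {m : Multiset ℕ} (hm : ∀ i ∈ m, 0 < i) : 0 < D m := by
  apply Finset.prod_pos
  intro i hi
  have : 0 < i := hm i (Multiset.mem_toFinset.mp hi)
  positivity

lemma D_erase {m : Multiset ℕ} {j : ℕ} (hj : j ∈ m) :
    D (m.erase j) * (j * m.count j) = D m := by
  classical
  have hjt : j ∈ m.toFinset := Multiset.mem_toFinset.mpr hj
  have hc : 1 ≤ m.count j := Multiset.one_le_count_iff_mem.mpr hj
  -- express D (m.erase j) as a product over m.toFinset
  have hsub : (m.erase j).toFinset ⊆ m.toFinset := by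
    intro x hx
    exact Multiset.mem_toFinset.mpr (Multiset.mem_of_mem_erase (Multiset.mem_toFinset.mp hx))
  have h1 : D (m.erase j)
      = ∏ i ∈ m.toFinset, (i ^ (m.erase j).count i * ((m.erase j).count i).factorial) := by
    refine Finset.prod_subset hsub ?_
    intro x _ hx
    have : (m.erase j).count x = 0 := by
      by_contra h
      exact hx (Multiset.mem_toFinset.mpr (Multiset.count_pos.mp (Nat.pos_of_ne_zero h)))
    simp [this]
  rw [h1, D, ← Finset.mul_prod_erase _ _ hjt, ← Finset.mul_prod_erase _ _ hjt]
  have h2 : ∀ i ∈ m.toFinset.erase j,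
      i ^ (m.erase j).count i * ((m.erase j).count i).factorial
        = i ^ m.count i * (m.count i).factorial := by
    intro i hi
    rw [Multiset.count_erase_of_ne (Finset.ne_of_mem_erase hi)]
  rw [Finset.prod_congr rfl h2, Multiset.count_erase_self]
  obtain ⟨c, hcc⟩ : ∃ c, m.count j = c + 1 := ⟨m.count j - 1, by omega⟩
  rw [hcc]
  simp only [Nat.add_sub_cancel, Nat.factorial_succ, pow_succ]
  ring

lemma parts_toFinset_subset {n : ℕ} (μ : Nat.Partition n) :
    μ.parts.toFinset ⊆ Finset.Icc 1 n := by
  intro i hi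
  have him : i ∈ μ.parts := Multiset.mem_toFinset.mp hi
  have h1 : 0 < i := μ.parts_pos him
  have h2 : i ≤ n := by
    rw [← μ.parts_sum]
    exact Multiset.le_sum_of_mem him
  exact Finset.mem_Icc.mpr ⟨h1, h2⟩

lemma pOf_eq {n : ℕ} (μ : Nat.Partition n) :
    (∏ j ∈ Finset.Icc 1 n,
      1 / ((j : ℝ) ^ (μ.parts.count j) * (Nat.factorial (μ.parts.count j) : ℝ)))
      = ((D μ.parts : ℝ))⁻¹ := by
  have h1 : (D μ.parts : ℝ)
      = ∏ j ∈ Finset.Icc 1 n, ((j : ℝ) ^ (μ.parts.count j)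
          * (Nat.factorial (μ.parts.count j) : ℝ)) := by
    rw [D]
    push_cast
    refine Finset.prod_subset (parts_toFinset_subset μ) ?_
    intro x _ hx
    have : μ.parts.count x = 0 := by
      by_contra h
      exact hx (Multiset.mem_toFinset.mpr (Multiset.count_pos.mp (Nat.pos_of_ne_zero h)))
    simp [this]
  rw [h1, ← Finset.prod_inv_distrib]
  refine Finset.prod_congr rfl fun j _ => ?_
  rw [one_div]

/-- `S n` is the sum of `p(λ)` over all partitions of `n`. -/
noncomputable def S (n : ℕ) : ℝ := ∑ μ : Nat.Partition n, ((D μ.parts : ℝ))⁻¹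

lemma S_zero : S 0 = 1 := by
  rw [S]
  rw [Fintype.sum_unique]
  simp [D]

lemma sum_partition_erase (n j : ℕ) (hj1 : 1 ≤ j) (hjn : j ≤ n) :
    ∑ μ ∈ Finset.univ.filter (fun μ : Nat.Partition n => j ∈ μ.parts),
        ((D (μ.parts.erase j) : ℝ))⁻¹
      = S (n - j) := by
  rw [S]
  refine Finset.sum_bij'
    (i := fun (μ : Nat.Partition n) (hμ : μ ∈ Finset.univ.filter
        (fun μ : Nat.Partition n => j ∈ μ.parts)) =>
      (⟨μ.parts.erase j,
        fun hi => μ.parts_pos (Multiset.mem_of_mem_erase hi), by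
        have hjm : j ∈ μ.parts := (Finset.mem_filter.mp hμ).2
        have := Multiset.cons_erase hjm
        have hs : (j ::ₘ μ.parts.erase j).sum = n := by rw [this, μ.parts_sum]
        rw [Multiset.sum_cons] at hs
        omega⟩ : Nat.Partition (n - j)))
    (j := fun (ν : Nat.Partition (n - j)) _ =>
      (⟨j ::ₘ ν.parts, fun hi => by
        rcases Multiset.mem_cons.mp hi with h | h
        · omega
        · exact ν.parts_pos h, by
        rw [Multiset.sum_cons, ν.parts_sum]; omega⟩ : Nat.Partition n))
    ?_ ?_ ?_ ?_ ?_
  · intro ν _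
    simp
  · intro ν _
    simp [Multiset.mem_cons_self]
  · intro μ hμ
    have hjm : j ∈ μ.parts := (Finset.mem_filter.mp hμ).2
    apply Nat.Partition.ext
    simpa using Multiset.cons_erase hjm
  · intro ν _
    apply Nat.Partition.ext
    simp [Multiset.erase_cons_head]
  · intro μ hμ
    rfl

lemma S_rec (n : ℕ) (hn : 1 ≤ n) :
    (n : ℝ) * S n = ∑ j ∈ Finset.Icc 1 n, S (n - j) := by
  have key : ∀ μ : Nat.Partition n,
      (n : ℝ) * ((D μ.parts : ℝ))⁻¹
        = ∑ i ∈ μ.parts.toFinset, ((D (μ.parts.erase i) : ℝ))⁻¹ := by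
    intro μ
    have hpos : ∀ i ∈ μ.parts, 0 < i := fun i hi => μ.parts_pos hi
    have hDpos : (0 : ℝ) < (D μ.parts : ℝ) := by exact_mod_cast D_pos hpos
    have hsum : (n : ℝ) = ∑ i ∈ μ.parts.toFinset, ((i : ℝ) * (μ.parts.count i : ℝ)) := by
      have hN : μ.parts.sum = ∑ i ∈ μ.parts.toFinset, μ.parts.count i * i := by
        conv_lhs => rw [Finset.sum_multiset_count μ.parts]
        simp [smul_eq_mul]
      have hc : ((μ.parts.sum : ℕ) : ℝ) = (n : ℝ) := by rw [μ.parts_sum]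
      rw [← hc, hN]
      push_cast
      refine Finset.sum_congr rfl fun i _ => ?_
      ring
    rw [hsum, Finset.sum_mul]
    refine Finset.sum_congr rfl fun i hi => ?_
    have him : i ∈ μ.parts := Multiset.mem_toFinset.mp hi
    have hkey := D_erase him
    have hEpos : (0 : ℝ) < (D (μ.parts.erase i) : ℝ) := by
      exact_mod_cast D_pos (fun x hx => μ.parts_pos (Multiset.mem_of_mem_erase hx))
    have hcast : (D (μ.parts.erase i) : ℝ) * ((i : ℝ) * (μ.parts.count i : ℝ))
        = (D μ.parts : ℝ) := by exact_mod_cast congrArg (Nat.cast : ℕ → ℝ) hkey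
    field_simp
    nlinarith [hcast]
  rw [S, Finset.mul_sum]
  rw [Finset.sum_congr rfl (fun μ _ => key μ)]
  have swap : ∑ μ : Nat.Partition n, ∑ i ∈ μ.parts.toFinset, ((D (μ.parts.erase i) : ℝ))⁻¹
      = ∑ i ∈ Finset.Icc 1 n, ∑ μ ∈ Finset.univ.filter
          (fun μ : Nat.Partition n => i ∈ μ.parts), ((D (μ.parts.erase i) : ℝ))⁻¹ := by
    have step1 : ∀ μ : Nat.Partition n,
        ∑ i ∈ μ.parts.toFinset, ((D (μ.parts.erase i) : ℝ))⁻¹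
          = ∑ i ∈ Finset.Icc 1 n,
              (if i ∈ μ.parts then ((D (μ.parts.erase i) : ℝ))⁻¹ else 0) := by
      intro μ
      rw [← Finset.sum_subset (parts_toFinset_subset μ) ?_]
      · refine Finset.sum_congr rfl fun i hi => ?_
        rw [if_pos (Multiset.mem_toFinset.mp hi)]
      · intro x _ hx
        rw [if_neg (fun h => hx (Multiset.mem_toFinset.mpr h))]
    rw [Finset.sum_congr rfl (fun μ _ => step1 μ), Finset.sum_comm]
    refine Finset.sum_congr rfl fun i _ => ?_
    rw [Finset.sum_filter]
  rw [swap]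
  refine Finset.sum_congr rfl fun i hi => ?_
  have hi' := Finset.mem_Icc.mp hi
  exact sum_partition_erase n i hi'.1 hi'.2

lemma S_nonneg (n : ℕ) : 0 ≤ S n := by
  apply Finset.sum_nonneg
  intro μ _
  positivity

lemma S_le_one (n : ℕ) : S n ≤ 1 := by
  induction n using Nat.strong_induction_on with
  | _ n ih =>
    rcases Nat.eq_zero_or_pos n with h0 | h1
    · rw [h0, S_zero]
    · have hrec := S_rec n h1
      have hb : ∑ j ∈ Finset.Icc 1 n, S (n - j) ≤ (n : ℝ) := by
        calc ∑ j ∈ Finset.Icc 1 n, S (n - j) ≤ ∑ j ∈ Finset.Icc 1 n, 1 := by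
              refine Finset.sum_le_sum fun j hj => ?_
              have hj' := Finset.mem_Icc.mp hj
              exact ih (n - j) (by omega)
          _ = (n : ℝ) := by simp
      have hnpos : (0 : ℝ) < n := by exact_mod_cast h1
      nlinarith [hrec]

lemma factorial_ge (c : ℕ) : 2 ^ (c - 1) ≤ c.factorial := by
  induction c with
  | zero => simp
  | succ c ih =>
    rcases Nat.eq_zero_or_pos c with h | h
    · simp [h]
    · have h1 : 2 ^ (c + 1 - 1) = 2 * 2 ^ (c - 1) := by
        rw [Nat.add_sub_cancel]
        conv_lhs => rw [show c = (c - 1) + 1 by omega]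
        ring
      rw [h1, Nat.factorial_succ]
      have : 2 ≤ c + 1 := by omega
      calc 2 * 2 ^ (c - 1) ≤ 2 * c.factorial := by
            exact Nat.mul_le_mul_left 2 ih
        _ ≤ (c + 1) * c.factorial := Nat.mul_le_mul_right _ this

lemma D_ge {m : Multiset ℕ} (hm : ∀ i ∈ m, 0 < i) :
    2 ^ (Multiset.card m - 1) ≤ D m := by
  classical
  have hcard : ∑ i ∈ m.toFinset, m.count i = Multiset.card m :=
    Multiset.toFinset_sum_count_eq m
  by_cases h1 : (1 : ℕ) ∈ m.toFinset
  · rw [D, ← Finset.mul_prod_erase _ _ h1]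
    have hge1 : 2 ^ (m.count 1 - 1) ≤ 1 ^ m.count 1 * (m.count 1).factorial := by
      simpa using factorial_ge (m.count 1)
    have hge2 : 2 ^ (∑ i ∈ m.toFinset.erase 1, m.count i)
        ≤ ∏ i ∈ m.toFinset.erase 1, (i ^ m.count i * (m.count i).factorial) := by
      rw [← Finset.prod_pow_eq_pow_sum]
      refine Finset.prod_le_prod ?_ ?_
      · intro i _; positivity
      · intro i hi
        have hi2 : 2 ≤ i := by
          have := hm i (Multiset.mem_toFinset.mp (Finset.mem_of_mem_erase hi))
          have := Finset.ne_of_mem_erase hi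
          omega
        calc 2 ^ m.count i ≤ i ^ m.count i := Nat.pow_le_pow_left hi2 _
          _ ≤ i ^ m.count i * (m.count i).factorial :=
              Nat.le_mul_of_pos_right _ (Nat.factorial_pos _)
    calc 2 ^ (Multiset.card m - 1)
        = 2 ^ ((m.count 1 - 1) + ∑ i ∈ m.toFinset.erase 1, m.count i) := by
          congr 1
          have hadd : m.count 1 + ∑ i ∈ m.toFinset.erase 1, m.count i
              = ∑ i ∈ m.toFinset, m.count i :=
            Finset.add_sum_erase _ (fun i => m.count i) h1
          have hc1 : 1 ≤ m.count 1 := Multiset.one_le_count_iff_mem.mpr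
            (Multiset.mem_toFinset.mp h1)
          omega
      _ = 2 ^ (m.count 1 - 1) * 2 ^ (∑ i ∈ m.toFinset.erase 1, m.count i) := pow_add 2 _ _
      _ ≤ _ := Nat.mul_le_mul hge1 hge2
  · calc 2 ^ (Multiset.card m - 1) ≤ 2 ^ (Multiset.card m) :=
          Nat.pow_le_pow_right (by omega) (by omega)
      _ = 2 ^ (∑ i ∈ m.toFinset, m.count i) := by rw [hcard]
      _ ≤ D m := by
          rw [D, ← Finset.prod_pow_eq_pow_sum]
          refine Finset.prod_le_prod (fun i _ => by positivity) ?_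
          intro i hi
          have hi2 : 2 ≤ i := by
            have := hm i (Multiset.mem_toFinset.mp hi)
            have : i ≠ 1 := fun h => h1 (h ▸ hi)
            omega
          calc 2 ^ m.count i ≤ i ^ m.count i := Nat.pow_le_pow_left hi2 _
            _ ≤ i ^ m.count i * (m.count i).factorial :=
                Nat.le_mul_of_pos_right _ (Nat.factorial_pos _)

end Stmt13Aux

/-- Cauchy's formula: `p(λ) = ∏_{j=1}^n 1/(j^{λ_j} ⬝ λ_j!)` is the probability that a
uniformly random permutation of `n` letters has cycle structure `λ`, where `λ_j` is the
number of parts of `λ` equal to `j`. -/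
noncomputable def pOf {n : ℕ} (μ : Nat.Partition n) : ℝ :=
  ∏ j ∈ Finset.Icc 1 n,
    1 / ((j : ℝ) ^ (μ.parts.count j) * (Nat.factorial (μ.parts.count j) : ℝ))

/-- `Σ_A(n)`: the sum of `p(λ)^r` over all partitions `λ` of `n` whose number of parts
`ω_n(λ)` exceeds `L(n) = log₂(2n³)`. -/
noncomputable def SigmaA (r n : ℕ) : ℝ :=
  ∑ μ ∈ Finset.univ.filter
      (fun μ : Nat.Partition n => Real.logb 2 (2 * (n : ℝ) ^ 3) < (μ.parts.card : ℝ)),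
    pOf μ ^ r

theorem stmt_13 (r : ℕ) (hr : 2 ≤ r) (n : ℕ) (hn : 1 ≤ n) :
    SigmaA r n ≤ 1 / (n : ℝ) ^ (3 * (r - 1)) := by
  have hn1 : (1 : ℝ) ≤ (n : ℝ) := by exact_mod_cast hn
  have hn0 : (0 : ℝ) < (n : ℝ) := by linarith
  have hcube : (0 : ℝ) < (n : ℝ) ^ 3 := by positivity
  -- bound each term in the filtered sum
  have hbound : ∀ μ ∈ Finset.univ.filter
      (fun μ : Nat.Partition n => Real.logb 2 (2 * (n : ℝ) ^ 3) < (μ.parts.card : ℝ)),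
      pOf μ ≤ ((n : ℝ) ^ 3)⁻¹ := by
    intro μ hμ
    have hfil := (Finset.mem_filter.mp hμ).2
    have hx : (0 : ℝ) < 2 * (n : ℝ) ^ 3 := by positivity
    have h1 : 2 * (n : ℝ) ^ 3 < (2 : ℝ) ^ ((μ.parts.card : ℕ) : ℝ) :=
      (Real.logb_lt_iff_lt_rpow (by norm_num) hx).mp hfil
    rw [Real.rpow_natCast] at h1
    have hω1 : 1 ≤ μ.parts.card := by
      by_contra h
      have : μ.parts.card = 0 := by omega
      rw [this] at h1
      simp at h1
      have h3 : (1 : ℝ) ≤ (n : ℝ) ^ 3 := one_le_pow₀ hn1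
      linarith
    have h2 : (n : ℝ) ^ 3 < (2 : ℝ) ^ (μ.parts.card - 1) := by
      have : (2 : ℝ) ^ (μ.parts.card : ℕ) = 2 * (2 : ℝ) ^ (μ.parts.card - 1) := by
        conv_lhs => rw [show μ.parts.card = (μ.parts.card - 1) + 1 by omega]
        ring
      rw [this] at h1
      linarith
    have hD : (2 : ℝ) ^ (μ.parts.card - 1) ≤ (Stmt13Aux.D μ.parts : ℝ) := by
      exact_mod_cast Stmt13Aux.D_ge (fun i hi => μ.parts_pos hi)
    have hDpos : (0 : ℝ) < (Stmt13Aux.D μ.parts : ℝ) := by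
      exact_mod_cast Stmt13Aux.D_pos (fun i hi => μ.parts_pos hi)
    rw [show pOf μ = ((Stmt13Aux.D μ.parts : ℝ))⁻¹ from Stmt13Aux.pOf_eq μ]
    exact inv_anti₀ hcube (by linarith)
  have hnonneg : ∀ μ : Nat.Partition n, 0 ≤ pOf μ := by
    intro μ
    rw [show pOf μ = ((Stmt13Aux.D μ.parts : ℝ))⁻¹ from Stmt13Aux.pOf_eq μ]
    positivity
  have step1 : SigmaA r n ≤ ((( n : ℝ) ^ 3)⁻¹) ^ (r - 1) *
      ∑ μ ∈ Finset.univ.filter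
        (fun μ : Nat.Partition n => Real.logb 2 (2 * (n : ℝ) ^ 3) < (μ.parts.card : ℝ)),
        pOf μ := by
    rw [SigmaA, Finset.mul_sum]
    refine Finset.sum_le_sum fun μ hμ => ?_
    have h1 := hbound μ hμ
    have h0 := hnonneg μ
    calc pOf μ ^ r = pOf μ ^ (r - 1) * pOf μ := by
          rw [← pow_succ]
          congr 1
          omega
      _ ≤ (((n : ℝ) ^ 3)⁻¹) ^ (r - 1) * pOf μ := by
          refine mul_le_mul_of_nonneg_right ?_ h0
          exact pow_le_pow_left₀ h0 h1 _
  have step2 : ∑ μ ∈ Finset.univ.filter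
      (fun μ : Nat.Partition n => Real.logb 2 (2 * (n : ℝ) ^ 3) < (μ.parts.card : ℝ)),
      pOf μ ≤ 1 := by
    have hsub : (∑ μ ∈ Finset.univ.filter
        (fun μ : Nat.Partition n => Real.logb 2 (2 * (n : ℝ) ^ 3) < (μ.parts.card : ℝ)),
        pOf μ) ≤ ∑ μ : Nat.Partition n, pOf μ :=
      Finset.sum_le_sum_of_subset_of_nonneg (Finset.filter_subset _ _)
        (fun μ _ _ => hnonneg μ)
    have heq : (∑ μ : Nat.Partition n, pOf μ) = Stmt13Aux.S n := by
      rw [Stmt13Aux.S]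
      exact Finset.sum_congr rfl fun μ _ => Stmt13Aux.pOf_eq μ
    have := Stmt13Aux.S_le_one n
    linarith
  have hfin : ((( n : ℝ) ^ 3)⁻¹) ^ (r - 1) = 1 / (n : ℝ) ^ (3 * (r - 1)) := by
    rw [← inv_pow, ← pow_mul]
    rw [one_div, inv_pow]
  calc SigmaA r n ≤ ((( n : ℝ) ^ 3)⁻¹) ^ (r - 1) * 1 := by
        refine step1.trans ?_
        refine mul_le_mul_of_nonneg_left step2 ?_
        positivity
    _ = 1 / (n : ℝ) ^ (3 * (r - 1)) := by rw [mul_one, hfin]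
end

section
/- Fix an integer r ≥ 2 and let z be a complex number with |z| < 1. Then the series Σ_{n=0}^∞ W_r(n) z^n converges, the infinite product ∏_{k=1}^∞ I_r(z^k / k^r) converges, and Σ_{n=0}^∞ W_r(n) z^n = ∏_{k=1}^∞ I_r(z^k / k^r), where I_r(y) := Σ_{j=0}^∞ y^j / (j!)^r. -/
/-- `W_r(n) = Σ_{λ ⊢ n} p(λ)^r`: the probability that `r` independent uniformly random
permutations of `n` letters all have the same cycle structure (note `W r 0 = 1`). -/
noncomputable def W (r n : ℕ) : ℝ :=
  ∑ μ : Nat.Partition n, pOf μ ^ r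

/-- `I_r(y) = Σ_{j=0}^∞ y^j/(j!)^r`, an entire function of `y`. -/
noncomputable def Ir (r : ℕ) (y : ℂ) : ℂ :=
  ∑' j : ℕ, y ^ j / (Nat.factorial j : ℂ) ^ r

namespace Stmt18Aux

open Finset Filter Topology

/-- One factor of the expanded infinite product. -/
noncomputable def g (r : ℕ) (z : ℂ) (k j : ℕ) : ℂ :=
  (z ^ (k + 1) / ((k : ℂ) + 1) ^ r) ^ j / (Nat.factorial j : ℂ) ^ r

lemma g_zero (r : ℕ) (z : ℂ) (k : ℕ) : g r z k 0 = 1 := by simp [g]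

/-- The summand indexed by a finitely supported function (multiplicity vector). -/
noncomputable def F (r : ℕ) (z : ℂ) (m : ℕ →₀ ℕ) : ℂ :=
  ∏ k ∈ m.support, g r z k (m k)

lemma F_eq_prod_subset (r : ℕ) (z : ℂ) {m : ℕ →₀ ℕ} {S : Finset ℕ} (h : m.support ⊆ S) :
    F r z m = ∏ k ∈ S, g r z k (m k) :=
  Finset.prod_subset h fun k _ hk => by
    rw [Finsupp.notMem_support_iff.1 hk, g_zero]

lemma F_single_add (r : ℕ) (z : ℂ) (a j : ℕ) (m : ℕ →₀ ℕ) (ha : a ∉ m.support) :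
    F r z (Finsupp.single a j + m) = g r z a j * F r z m := by
  classical
  rcases eq_or_ne j 0 with rfl | hj
  · simp [g_zero]
  · have hd : Disjoint (Finsupp.single a j).support m.support := by
      rw [Finsupp.support_single_ne_zero a hj]
      simpa using ha
    rw [F, Finsupp.support_add_eq hd, Finsupp.support_single_ne_zero a hj,
      ← Finset.insert_eq, Finset.prod_insert ha]
    congr 1
    · rw [Finsupp.add_apply, Finsupp.single_eq_same, Finsupp.notMem_support_iff.1 ha, add_zero]
    · refine Finset.prod_congr rfl fun k hk => ?_
      have hka : k ≠ a := fun h => ha (h ▸ hk)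
      rw [Finsupp.add_apply, Finsupp.single_eq_of_ne' (Ne.symm hka), zero_add]

lemma multiset_sum_sum {β : Type*} (s : Finset β) (f : β → Multiset ℕ) :
    (∑ k ∈ s, f k).sum = ∑ k ∈ s, (f k).sum := by
  classical
  induction s using Finset.induction_on with
  | empty => simp
  | @insert a s ha ih => rw [Finset.sum_insert ha, Finset.sum_insert ha, Multiset.sum_add, ih]

/-- The partition associated to a multiplicity vector. -/
noncomputable def toPartition (m : ℕ →₀ ℕ) :
    Nat.Partition (m.sum fun k c => (k + 1) * c) where
  parts := ∑ k ∈ m.support, Multiset.replicate (m k) (k + 1)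
  parts_pos := by
    intro i hi
    rw [Multiset.mem_sum] at hi
    obtain ⟨k, -, hk⟩ := hi
    rw [Multiset.eq_of_mem_replicate hk]
    exact k.succ_pos
  parts_sum := by
    rw [multiset_sum_sum, Finsupp.sum]
    refine Finset.sum_congr rfl fun k _ => ?_
    rw [Multiset.sum_replicate, smul_eq_mul, mul_comm]

lemma count_parts_zero {n : ℕ} (μ : Nat.Partition n) : μ.parts.count 0 = 0 :=
  Multiset.count_eq_zero.2 fun h => lt_irrefl 0 (μ.parts_pos h)

lemma count_toPartition (m : ℕ →₀ ℕ) (j : ℕ) :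
    (toPartition m).parts.count (j + 1) = m j := by
  classical
  show (∑ k ∈ m.support, Multiset.replicate (m k) (k + 1)).count (j + 1) = m j
  rw [Multiset.count_sum']
  simp only [Multiset.count_replicate, add_left_inj]
  rw [Finset.sum_ite_eq']
  split
  · rfl
  · next h => exact (Finsupp.notMem_support_iff.1 h).symm

/-- The multiplicity vector of a partition: `countsOf μ k` is the number of parts equal
to `k+1`. -/
noncomputable def countsOf {n : ℕ} (μ : Nat.Partition n) : ℕ →₀ ℕ :=
  Finsupp.comapDomain (· + 1) μ.parts.toFinsupp fun x _ y _ h => by simpa using h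

lemma countsOf_apply {n : ℕ} (μ : Nat.Partition n) (k : ℕ) :
    countsOf μ k = μ.parts.count (k + 1) := by
  rfl

lemma parts_toPartition_countsOf {n : ℕ} (μ : Nat.Partition n) :
    (toPartition (countsOf μ)).parts = μ.parts := by
  ext a
  rcases a with _ | j
  · rw [count_parts_zero, count_parts_zero]
  · rw [count_toPartition, countsOf_apply]

lemma sum_countsOf {n : ℕ} (μ : Nat.Partition n) :
    ((countsOf μ).sum fun k c => (k + 1) * c) = n := by
  rw [← (toPartition (countsOf μ)).parts_sum, parts_toPartition_countsOf, μ.parts_sum]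

/-- The equivalence between multiplicity vectors and partitions (of arbitrary size). -/
noncomputable def E : (ℕ →₀ ℕ) ≃ (Σ n : ℕ, Nat.Partition n) where
  toFun m := ⟨_, toPartition m⟩
  invFun p := countsOf p.2
  left_inv m := Finsupp.ext fun k => by rw [countsOf_apply, count_toPartition]
  right_inv := by
    rintro ⟨n, μ⟩
    have key : ∀ (n₁ n₂ : ℕ) (p₁ : Nat.Partition n₁) (p₂ : Nat.Partition n₂), n₁ = n₂ →
        p₁.parts = p₂.parts → (⟨n₁, p₁⟩ : Σ n : ℕ, Nat.Partition n) = ⟨n₂, p₂⟩ := by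
      rintro n₁ n₂ p₁ p₂ rfl h
      rw [Nat.Partition.ext h]
    exact key _ _ _ _ (sum_countsOf μ) (parts_toPartition_countsOf μ)

lemma support_countsOf_subset {n : ℕ} (μ : Nat.Partition n) :
    (countsOf μ).support ⊆ Finset.range n := by
  intro k hk
  rw [Finsupp.mem_support_iff, countsOf_apply] at hk
  have hmem : (k + 1) ∈ μ.parts := by
    by_contra h
    exact hk (Multiset.count_eq_zero.2 h)
  have := Multiset.single_le_sum (fun x _ => Nat.zero_le x) _ hmem
  rw [μ.parts_sum] at this
  rw [Finset.mem_range]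
  omega

lemma F_countsOf (r : ℕ) (z : ℂ) {n : ℕ} (μ : Nat.Partition n) :
    F r z (countsOf μ) = ((pOf μ : ℝ) : ℂ) ^ r * z ^ n := by
  have hsupp := support_countsOf_subset μ
  have hn : n = ∑ k ∈ Finset.range n, (k + 1) * countsOf μ k :=
    (sum_countsOf μ).symm.trans (Finsupp.sum_of_support_subset _ hsupp _ (by intros; simp))
  have hpOf : pOf μ = ∏ k ∈ Finset.range n,
      1 / (((k : ℝ) + 1) ^ (countsOf μ k) * (Nat.factorial (countsOf μ k) : ℝ)) := by
    rw [pOf, ← Finset.Ico_add_one_right_eq_Icc, Finset.prod_Ico_eq_prod_range]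
    simp only [Nat.add_sub_cancel]
    refine Finset.prod_congr rfl fun k _ => ?_
    rw [add_comm 1 k, ← countsOf_apply]
    push_cast
    ring
  rw [F_eq_prod_subset r z hsupp, hpOf]
  push_cast
  rw [← Finset.prod_pow]
  rw [congrArg (fun t => z ^ t) hn]
  rw [← Finset.prod_pow_eq_pow_sum, ← Finset.prod_mul_distrib]
  refine Finset.prod_congr rfl fun k _ => ?_
  have h1 : ((k : ℂ) + 1) ≠ 0 := by exact_mod_cast Nat.succ_ne_zero k
  have h2 : ((Nat.factorial (countsOf μ k) : ℂ)) ≠ 0 :=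
    Nat.cast_ne_zero.2 (Nat.factorial_ne_zero _)
  rw [g]
  have h3 : ((Nat.factorial (countsOf μ k) : ℂ)) ^ r * ((Nat.factorial (countsOf μ k) : ℂ))⁻¹ ^ r = 1 := by
    rw [← mul_pow, mul_inv_cancel₀ h2, one_pow]
  field_simp
  linear_combination (-(z ^ (k * countsOf μ k) * z ^ countsOf μ k * (1 + (k : ℂ))⁻¹ ^ (r * countsOf μ k))) * h3

lemma pOf_nonneg {n : ℕ} (μ : Nat.Partition n) : 0 ≤ pOf μ :=
  Finset.prod_nonneg fun j _ => by positivity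

lemma pOf_le_one {n : ℕ} (μ : Nat.Partition n) : pOf μ ≤ 1 := by
  refine Finset.prod_le_one (fun j _ => by positivity) fun j hj => ?_
  rw [Finset.mem_Icc] at hj
  have h1 : (1 : ℝ) ≤ (j : ℝ) := by exact_mod_cast hj.1
  have hf : (1 : ℝ) ≤ (Nat.factorial (μ.parts.count j) : ℝ) := by
    exact_mod_cast Nat.one_le_iff_ne_zero.2 (Nat.factorial_ne_zero _)
  have hp : (1 : ℝ) ≤ (j : ℝ) ^ (μ.parts.count j) := one_le_pow₀ h1
  rw [div_le_one (by nlinarith)]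
  nlinarith

lemma norm_F_countsOf (r : ℕ) (z : ℂ) {n : ℕ} (μ : Nat.Partition n) :
    ‖F r z (countsOf μ)‖ = pOf μ ^ r * ‖z‖ ^ n := by
  rw [F_countsOf, norm_mul, norm_pow, norm_pow, Complex.norm_real,
    Real.norm_eq_abs, abs_of_nonneg (pOf_nonneg μ)]

variable {r : ℕ} {z : ℂ}

set_option maxHeartbeats 1000000 in
lemma sum_pOf_le (n : ℕ) : ∑ μ : Nat.Partition n, pOf μ ≤ Real.exp 1 * (n + 1) := by
  classical
  set cnt : Nat.Partition n → (Fin n → ℕ) := fun μ i => μ.parts.count ((i : ℕ) + 1) with hcnt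
  have hbig : ∀ (μ : Nat.Partition n) (j : ℕ), n ≤ j → μ.parts.count (j + 1) = 0 := by
    intro μ j hj
    refine Multiset.count_eq_zero.2 fun hmem => ?_
    have := Multiset.single_le_sum (fun x _ => Nat.zero_le x) _ hmem
    rw [μ.parts_sum] at this
    omega
  have hinj : Function.Injective cnt := by
    intro μ₁ μ₂ h
    apply Nat.Partition.ext
    ext a
    rcases a with _ | j
    · rw [count_parts_zero, count_parts_zero]
    · rcases lt_or_ge j n with hj | hj
      · exact congrFun h ⟨j, hj⟩
      · rw [hbig μ₁ j hj, hbig μ₂ j hj]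
  have hpOf : ∀ μ : Nat.Partition n,
      pOf μ = ∏ i : Fin n, (1 / ((i : ℝ) + 1)) ^ (cnt μ i) / (Nat.factorial (cnt μ i) : ℝ) := by
    intro μ
    have h1 : pOf μ = ∏ k ∈ Finset.range n,
        (1 / ((k : ℝ) + 1)) ^ (μ.parts.count (k + 1))
          / (Nat.factorial (μ.parts.count (k + 1)) : ℝ) := by
      rw [pOf, ← Finset.Ico_add_one_right_eq_Icc, Finset.prod_Ico_eq_prod_range]
      simp only [Nat.add_sub_cancel]
      refine Finset.prod_congr rfl fun k _ => ?_
      rw [add_comm 1 k]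
      push_cast
      rw [div_pow, one_pow, div_div]
    rw [h1, ← Fin.prod_univ_eq_prod_range]
  have hmem : ∀ μ : Nat.Partition n,
      cnt μ ∈ Fintype.piFinset fun _ : Fin n => Finset.range (n + 1) := by
    intro μ
    rw [Fintype.mem_piFinset]
    intro i
    rw [Finset.mem_range]
    set c := μ.parts.count ((i : ℕ) + 1) with hc
    have hrep : Multiset.replicate c ((i : ℕ) + 1) ≤ μ.parts :=
      Multiset.le_count_iff_replicate_le.1 le_rfl
    obtain ⟨u, hu⟩ := Multiset.le_iff_exists_add.1 hrep
    have hsum : μ.parts.sum = c * ((i : ℕ) + 1) + u.sum := by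
      conv_lhs => rw [hu]
      rw [Multiset.sum_add, Multiset.sum_replicate, smul_eq_mul]
    rw [μ.parts_sum] at hsum
    have hle : c ≤ c * ((i : ℕ) + 1) := Nat.le_mul_of_pos_right _ (Nat.succ_pos _)
    show c < n + 1
    omega
  set G : (Fin n → ℕ) → ℝ :=
    fun x => ∏ i : Fin n, (1 / ((i : ℝ) + 1)) ^ (x i) / (Nat.factorial (x i) : ℝ) with hG
  have hGnn : ∀ x, 0 ≤ G x := fun x => Finset.prod_nonneg fun i _ => by positivity
  calc ∑ μ : Nat.Partition n, pOf μ = ∑ μ : Nat.Partition n, G (cnt μ) :=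
        Finset.sum_congr rfl fun μ _ => hpOf μ
    _ = ∑ x ∈ Finset.univ.image cnt, G x :=
        (Finset.sum_image fun μ _ ν _ h => hinj h).symm
    _ ≤ ∑ x ∈ Fintype.piFinset fun _ : Fin n => Finset.range (n + 1), G x := by
        refine Finset.sum_le_sum_of_subset_of_nonneg ?_ fun x _ _ => hGnn x
        intro x hx
        obtain ⟨μ, -, rfl⟩ := Finset.mem_image.1 hx
        exact hmem μ
    _ = ∏ i : Fin n, ∑ c ∈ Finset.range (n + 1), (1 / ((i : ℝ) + 1)) ^ c / (Nat.factorial c : ℝ) := by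
        simp only [hG]
        exact (Finset.prod_univ_sum (fun _ : Fin n => Finset.range (n + 1))
          (fun i c => (1 / ((i : ℝ) + 1)) ^ c / (Nat.factorial c : ℝ))).symm
    _ ≤ ∏ i : Fin n, Real.exp (1 / ((i : ℝ) + 1)) := by
        refine Finset.prod_le_prod (fun i _ => Finset.sum_nonneg fun c _ => by positivity)
          fun i _ => ?_
        exact Real.sum_le_exp_of_nonneg (by positivity) (n + 1)
    _ = Real.exp (∑ i : Fin n, 1 / ((i : ℝ) + 1)) := (Real.exp_sum _ _).symm
    _ ≤ Real.exp 1 * (n + 1) := by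
        have hH : ∑ i : Fin n, 1 / ((i : ℝ) + 1) = (harmonic n : ℝ) := by
          rw [Fin.sum_univ_eq_sum_range (fun k => 1 / ((k : ℝ) + 1)), harmonic]
          push_cast
          simp [one_div]
        have h1 := harmonic_le_one_add_log n
        have hlog : Real.log n ≤ Real.log (n + 1) := by
          rcases Nat.eq_zero_or_pos n with rfl | hn
          · simp
          · refine Real.log_le_log (by positivity) (by push_cast; linarith)
        calc Real.exp (∑ i : Fin n, 1 / ((i : ℝ) + 1))
            ≤ Real.exp (1 + Real.log ((n : ℝ) + 1)) := by
              rw [hH]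
              refine Real.exp_le_exp.2 ?_
              calc (harmonic n : ℝ) ≤ 1 + Real.log n := h1
                _ ≤ 1 + Real.log ((n : ℝ) + 1) := by linarith
          _ = Real.exp 1 * ((n : ℝ) + 1) := by
              rw [Real.exp_add, Real.exp_log (by positivity)]

lemma summable_sigma_norm (hr : 1 ≤ r) (hz : ‖z‖ < 1) :
    Summable fun p : Σ n : ℕ, Nat.Partition n => pOf p.2 ^ r * ‖z‖ ^ p.1 := by
  have hnn : ∀ p : Σ n : ℕ, Nat.Partition n, 0 ≤ pOf p.2 ^ r * ‖z‖ ^ p.1 := fun p => by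
    have := pOf_nonneg p.2
    positivity
  rw [summable_sigma_of_nonneg hnn]
  refine ⟨fun n => Summable.of_finite, ?_⟩
  have key : ∀ n : ℕ, (∑' μ : Nat.Partition n, pOf μ ^ r * ‖z‖ ^ n)
      ≤ Real.exp 1 * (n + 1) * ‖z‖ ^ n := by
    intro n
    rw [tsum_fintype, ← Finset.sum_mul]
    refine mul_le_mul_of_nonneg_right ?_ (by positivity)
    refine le_trans (Finset.sum_le_sum fun μ _ => ?_) (sum_pOf_le n)
    calc pOf μ ^ r ≤ pOf μ ^ 1 := pow_le_pow_of_le_one (pOf_nonneg μ) (pOf_le_one μ) hr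
      _ = pOf μ := pow_one _
  have hz' : ‖(‖z‖ : ℝ)‖ < 1 := by
    rw [Real.norm_eq_abs, abs_of_nonneg (norm_nonneg z)]; exact hz
  have h1 : Summable fun n : ℕ => (n : ℝ) * ‖z‖ ^ n := by
    simpa using summable_pow_mul_geometric_of_norm_lt_one 1 hz'
  have h2 : Summable fun n : ℕ => ‖z‖ ^ n := summable_geometric_of_lt_one (norm_nonneg z) hz
  refine Summable.of_nonneg_of_le
    (fun n => tsum_nonneg fun μ => hnn ⟨n, μ⟩) key ?_
  exact (((h1.add h2).mul_left (Real.exp 1)).congr fun n => by push_cast; ring)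

lemma summable_norm_F (hr : 1 ≤ r) (hz : ‖z‖ < 1) :
    Summable fun m : ℕ →₀ ℕ => ‖F r z m‖ := by
  have h2 : Summable fun p : Σ n : ℕ, Nat.Partition n => ‖F r z (countsOf p.2)‖ :=
    (summable_sigma_norm hr hz).congr fun ⟨n, μ⟩ => (norm_F_countsOf r z μ).symm
  exact E.symm.summable_iff.1 h2

lemma Ir_eq_tsum_g (k : ℕ) : Ir r (z ^ (k + 1) / ((k : ℂ) + 1) ^ r) = ∑' j : ℕ, g r z k j := rfl

lemma norm_base_lt_one (hz : ‖z‖ < 1) (k : ℕ) : ‖z ^ (k + 1) / ((k : ℂ) + 1) ^ r‖ < 1 := by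
  have hk : ((k : ℂ) + 1) = ((k + 1 : ℕ) : ℂ) := by push_cast; ring
  rw [norm_div, norm_pow, norm_pow, hk, Complex.norm_natCast]
  have h1 : (1 : ℝ) ≤ ((k + 1 : ℕ) : ℝ) ^ r := one_le_pow₀ (by exact_mod_cast Nat.succ_le_succ k.zero_le)
  calc ‖z‖ ^ (k + 1) / ((k + 1 : ℕ) : ℝ) ^ r ≤ ‖z‖ ^ (k + 1) / 1 := by
        gcongr
    _ = ‖z‖ ^ (k + 1) := div_one _
    _ < 1 := pow_lt_one₀ (norm_nonneg z) hz (Nat.succ_ne_zero k)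

lemma summable_norm_g (hz : ‖z‖ < 1) (k : ℕ) : Summable fun j : ℕ => ‖g r z k j‖ := by
  refine Summable.of_nonneg_of_le (fun j => norm_nonneg _) (fun j => ?_)
    (summable_geometric_of_lt_one (norm_nonneg (z ^ (k + 1) / ((k : ℂ) + 1) ^ r))
      (norm_base_lt_one hz k))
  rw [g, norm_div, norm_pow]
  refine div_le_self (pow_nonneg (norm_nonneg _) _) ?_
  rw [norm_pow, Complex.norm_natCast]
  exact one_le_pow₀ (by exact_mod_cast Nat.one_le_iff_ne_zero.2 (Nat.factorial_ne_zero j))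

lemma prod_eq (hr : 1 ≤ r) (hz : ‖z‖ < 1) (S : Finset ℕ) :
    ∏ k ∈ S, Ir r (z ^ (k + 1) / ((k : ℂ) + 1) ^ r)
      = ∑' m : ℕ →₀ ℕ, Set.indicator {m : ℕ →₀ ℕ | m.support ⊆ S} (F r z) m := by
  classical
  induction S using Finset.induction_on with
  | empty =>
    rw [Finset.prod_empty]
    have hside : ∀ m : ℕ →₀ ℕ, m ≠ 0 →
        Set.indicator {m : ℕ →₀ ℕ | m.support ⊆ (∅ : Finset ℕ)} (F r z) m = 0 := by
      intro m hm
      refine Set.indicator_of_notMem ?_ _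
      simpa using hm
    rw [tsum_eq_single (0 : ℕ →₀ ℕ) hside, Set.indicator_of_mem (by simp)]
    simp [F]
  | @insert a S ha ih =>
    rw [Finset.prod_insert ha, ih, ← _root_.tsum_subtype, Ir_eq_tsum_g]
    have hFs : Summable fun m : {m : ℕ →₀ ℕ | m.support ⊆ S} => ‖F r z (m : ℕ →₀ ℕ)‖ :=
      (summable_norm_F hr hz).subtype _
    rw [tsum_mul_tsum_of_summable_norm (summable_norm_g hz a) hFs]
    set i : ℕ × {m : ℕ →₀ ℕ | m.support ⊆ S} → (ℕ →₀ ℕ) :=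
      fun p => Finsupp.single a p.1 + (p.2 : ℕ →₀ ℕ) with hi
    have hinj : Function.Injective i := by
      rintro ⟨j₁, m₁, hm₁⟩ ⟨j₂, m₂, hm₂⟩ h
      simp only [hi] at h
      have ham₁ : m₁ a = 0 := Finsupp.notMem_support_iff.1 fun h' => ha (hm₁ h')
      have ham₂ : m₂ a = 0 := Finsupp.notMem_support_iff.1 fun h' => ha (hm₂ h')
      have hj : j₁ = j₂ := by
        have := DFunLike.congr_fun h a
        simpa [Finsupp.add_apply, Finsupp.single_eq_same, ham₁, ham₂] using this
      subst hj
      have hm : m₁ = m₂ := by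
        have := add_left_cancel h
        exact this
      simp [Prod.ext_iff, Subtype.ext_iff, hm]
    have hrange : Function.support
        (Set.indicator {m : ℕ →₀ ℕ | m.support ⊆ insert a S} (F r z)) ⊆ Set.range i := by
      intro m hm
      have hmem : m.support ⊆ insert a S := by
        by_contra h
        exact hm (Set.indicator_of_notMem h _)
      have herase : (m.erase a).support ⊆ S := by
        intro x hx
        rw [Finsupp.support_erase, Finset.mem_erase] at hx
        rcases Finset.mem_insert.1 (hmem hx.2) with h | h
        · exact absurd h hx.1
        · exact h
      exact ⟨(m a, ⟨m.erase a, herase⟩), Finsupp.single_add_erase a m⟩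
    rw [← hinj.tsum_eq hrange]
    refine tsum_congr ?_
    rintro ⟨j, m, hm⟩
    have ham : a ∉ m.support := fun h => ha (hm h)
    have hm' : m.support ⊆ S := hm
    have hmem : (Finsupp.single a j + m) ∈ {m' : ℕ →₀ ℕ | m'.support ⊆ insert a S} := by
      show (Finsupp.single a j + m).support ⊆ insert a S
      refine (Finsupp.support_add).trans ?_
      refine Finset.union_subset ((Finsupp.support_single_subset).trans ?_) ?_
      · simp
      · exact hm'.trans (Finset.subset_insert a S)
    simp only [hi]
    rw [Set.indicator_of_mem hmem, F_single_add r z a j m ham]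

lemma hasProd_Ir (hr : 1 ≤ r) (hz : ‖z‖ < 1) :
    HasProd (fun k : ℕ => Ir r (z ^ (k + 1) / ((k : ℂ) + 1) ^ r))
      (∑' m : ℕ →₀ ℕ, F r z m) := by
  have hb : ∀ (S : Finset ℕ) (m : ℕ →₀ ℕ),
      ‖Set.indicator {m : ℕ →₀ ℕ | m.support ⊆ S} (F r z) m‖ ≤ ‖F r z m‖ :=
    fun S m => norm_indicator_le_norm_self _ _
  have hab : ∀ m : ℕ →₀ ℕ, Tendsto
      (fun S : Finset ℕ => Set.indicator {m' : ℕ →₀ ℕ | m'.support ⊆ S} (F r z) m)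
      atTop (𝓝 (F r z m)) := by
    intro m
    refine Tendsto.congr' ?_ tendsto_const_nhds
    filter_upwards [eventually_ge_atTop m.support] with S hS
    have hmem : m ∈ {m' : ℕ →₀ ℕ | m'.support ⊆ S} := hS
    exact (Set.indicator_of_mem hmem _).symm
  have h := tendsto_tsum_of_dominated_convergence (𝓕 := (atTop : Filter (Finset ℕ)))
      (summable_norm_F hr hz) hab (Eventually.of_forall hb)
  exact h.congr fun S => (prod_eq hr hz S).symm

end Stmt18Aux

theorem stmt_18 (r : ℕ) (hr : 2 ≤ r) (z : ℂ) (hz : ‖z‖ < 1) :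
    Summable (fun n : ℕ => (W r n : ℂ) * z ^ n) ∧
      Multipliable (fun k : ℕ => Ir r (z ^ (k + 1) / ((k : ℂ) + 1) ^ r)) ∧
      ∑' n : ℕ, (W r n : ℂ) * z ^ n
        = ∏' k : ℕ, Ir r (z ^ (k + 1) / ((k : ℂ) + 1) ^ r) := by
  classical
  have hz' : ‖z‖ < 1 := hz
  have hr1 : (1 : ℕ) ≤ r := le_trans one_le_two hr
  have hF : Summable (Stmt18Aux.F r z) := (Stmt18Aux.summable_norm_F hr1 hz').of_norm
  have hprod := Stmt18Aux.hasProd_Ir (r := r) (z := z) hr1 hz'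
  have hFs : Summable fun p : Σ n : ℕ, Nat.Partition n =>
      Stmt18Aux.F r z (Stmt18Aux.countsOf p.2) :=
    (Stmt18Aux.E.symm.summable_iff (f := Stmt18Aux.F r z)).2 hF
  have hWn : ∀ n : ℕ, (∑' μ : Nat.Partition n, Stmt18Aux.F r z (Stmt18Aux.countsOf μ))
      = (W r n : ℂ) * z ^ n := by
    intro n
    rw [tsum_fintype, W]
    push_cast
    rw [Finset.sum_mul]
    exact Finset.sum_congr rfl fun μ _ => Stmt18Aux.F_countsOf r z μ
  have hWsum : Summable fun n : ℕ => (W r n : ℂ) * z ^ n := hFs.sigma.congr hWn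
  refine ⟨hWsum, hprod.multipliable, ?_⟩
  have h1 : ∑' n : ℕ, (W r n : ℂ) * z ^ n = ∑' m : ℕ →₀ ℕ, Stmt18Aux.F r z m := by
    rw [← tsum_congr hWn, ← hFs.tsum_sigma]
    exact Stmt18Aux.E.symm.tsum_eq (Stmt18Aux.F r z)
  rw [h1, hprod.tprod_eq]
end

section
/- Let w be a complex number and let z be a complex number with |z| < 1. Then Σ_{n=0}^∞ f_n(w) z^n = exp(−w · Log(1 − z)), where f_n(w) := (1/n!) · Σ_{σ ∈ S_n} w^{ω_n(σ)} for n ≥ 1, f_0(w) := 1, and Log denotes the principal branch of the complex logarithm (so the right-hand side is the principal value of (1 − z)^{−w}). -/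
open Equiv Equiv.Perm Finset Complex



/-- ω_n(σ): the number of disjoint cycles of a permutation of `n` letters,
including fixed points. -/
def numCycles {n : ℕ} (σ : Equiv.Perm (Fin n)) : ℕ :=
  σ.cycleType.card + (n - σ.cycleType.sum)

/-- `f_n(w) = (1/n!) Σ_{σ ∈ S_n} w^{ω_n(σ)}`, the expectation of `w` raised to the
number of cycles of a uniformly random permutation of `n` letters (note `f_0 w = 1`). -/
noncomputable def fChar (n : ℕ) (w : ℂ) : ℂ :=
  (∑ σ : Equiv.Perm (Fin n), w ^ numCycles σ) / (Nat.factorial n : ℂ)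


open Equiv Equiv.Perm Finset

variable {α : Type*} [Fintype α] [DecidableEq α]

lemma support_swap_mul_of_fixed {f : Perm α} {a b : α} (ha : f a = a) (hb : f b ≠ b)
    (hab : b ≠ a) : (Equiv.swap a b * f).support = insert a f.support := by
  ext x
  simp only [Perm.mem_support, Perm.mul_apply, Finset.mem_insert]
  by_cases hxa : x = a
  · subst hxa
    simp [ha, Equiv.swap_apply_left, hab]
  · by_cases hxb : f x = b
    · have hxb' : x ≠ b := fun h => hb (h ▸ hxb)
      rw [hxb, Equiv.swap_apply_right]
      constructor
      · intro _; right; exact Ne.symm hxb'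
      · intro _; exact Ne.symm hxa
    · have hfxa : f x ≠ a := fun h => hxa (f.injective (by rw [h, ha]))
      rw [Equiv.swap_apply_of_ne_of_ne hfxa hxb]
      simp [hxa]

lemma isCycle_swap_mul_of_fixed {c : Perm α} {a b : α} (hc : c.IsCycle)
    (hac : a ∉ c.support) (hbc : b ∈ c.support) (hab : b ≠ a) :
    (Equiv.swap a b * c).IsCycle := by
  have hca : c a = a := Equiv.Perm.notMem_support.mp hac
  have hcb : c b ≠ b := Equiv.Perm.mem_support.mp hbc
  set d := Equiv.swap a b * c with hd
  have hda : d a = b := by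
    simp [hd, Perm.mul_apply, hca, Equiv.swap_apply_left]
  have key : ∀ k : ℕ, d.SameCycle a ((c ^ k) b) := by
    intro k
    induction k with
    | zero => exact ⟨1, by simpa using hda⟩
    | succ k ih =>
      have hy : (c ^ k) b ∈ c.support := Equiv.Perm.pow_apply_mem_support.mpr hbc
      by_cases hyb : c ((c ^ k) b) = b
      · have : (c ^ (k + 1)) b = b := by rw [pow_succ']; simpa using hyb
        rw [this]
        exact ⟨1, by simpa using hda⟩
      · have hya : c ((c ^ k) b) ≠ a := by
          intro h
          exact hac (h ▸ Equiv.Perm.apply_mem_support.mpr hy)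
        have hdy : d ((c ^ k) b) = (c ^ (k + 1)) b := by
          rw [pow_succ']
          simp only [hd, Perm.mul_apply]
          rw [Equiv.swap_apply_of_ne_of_ne hya hyb]
        exact ih.trans ⟨1, by simpa using hdy⟩
  refine ⟨a, by rw [hda]; exact hab, fun y hy => ?_⟩
  have hy' : y ∈ d.support := Equiv.Perm.mem_support.mpr hy
  rw [hd, support_swap_mul_of_fixed hca hcb hab, Finset.mem_insert] at hy'
  rcases hy' with rfl | hy'
  · exact Equiv.Perm.SameCycle.refl _ _
  · obtain ⟨i, hi⟩ := hc.exists_pow_eq hcb (Equiv.Perm.mem_support.mp hy')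
    exact hi ▸ key i

lemma cycleType_swap_mul_of_mem {f : Perm α} {a b : α} (ha : f a = a) (hb : f b ≠ b)
    (hab : b ≠ a) :
    ∃ (k : ℕ) (m : Multiset ℕ), f.cycleType = k ::ₘ m ∧
      (Equiv.swap a b * f).cycleType = (k + 1) ::ₘ m := by
  set c := f.cycleOf b with hcdef
  have hbsupp : b ∈ f.support := Equiv.Perm.mem_support.mpr hb
  have hc : c ∈ f.cycleFactorsFinset := Equiv.Perm.cycleOf_mem_cycleFactorsFinset_iff.mpr hbsupp
  have hcyc : c.IsCycle := (Equiv.Perm.mem_cycleFactorsFinset_iff.mp hc).1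
  have hbc : b ∈ c.support := by
    rw [Equiv.Perm.mem_support, hcdef, Equiv.Perm.cycleOf_apply_self]
    exact hb
  have haf : a ∉ f.support := Equiv.Perm.notMem_support.mpr ha
  have hac : a ∉ c.support := fun h => haf (Equiv.Perm.mem_cycleFactorsFinset_support_le hc h)
  have hca : c a = a := Equiv.Perm.notMem_support.mp hac
  have hcb : c b ≠ b := Equiv.Perm.mem_support.mp hbc
  have hcomm : Commute c f := Equiv.Perm.self_mem_cycle_factors_commute hc
  set g := f * c⁻¹ with hgdef
  have hfcg : f = c * g := by
    rw [hgdef, ← mul_assoc, hcomm.eq, mul_assoc, mul_inv_cancel, mul_one]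
  have hdisj : Perm.Disjoint c g :=
    (Equiv.Perm.disjoint_mul_inv_of_mem_cycleFactorsFinset hc).symm
  set d := Equiv.swap a b * c with hddef
  have hdsupp : d.support = insert a c.support := support_swap_mul_of_fixed hca hcb hab
  have hdcyc : d.IsCycle := isCycle_swap_mul_of_fixed hcyc hac hbc hab
  have hag : a ∉ g.support := fun h => haf (by
    have := Equiv.Perm.support_mul_le f c⁻¹ h
    rcases Finset.mem_union.mp this with h' | h'
    · exact h'
    · exact absurd (Equiv.Perm.support_inv c ▸ h') hac)
  have hdg : Perm.Disjoint d g := by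
    intro x
    rcases hdisj x with hx | hx
    · by_cases hxa : x = a
      · subst hxa
        exact Or.inr (Equiv.Perm.notMem_support.mp hag)
      · left
        have : x ∉ d.support := by
          rw [hdsupp, Finset.mem_insert]
          push_neg
          exact ⟨hxa, Equiv.Perm.notMem_support.mpr hx⟩
        exact Equiv.Perm.notMem_support.mp this
    · exact Or.inr hx
  have h1 : Equiv.swap a b * f = d * g := by rw [hfcg, hddef, mul_assoc]
  refine ⟨c.support.card, g.cycleType, ?_, ?_⟩
  · rw [hfcg, Equiv.Perm.Disjoint.cycleType_mul hdisj, hcyc.cycleType]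
    rfl
  · rw [h1, Equiv.Perm.Disjoint.cycleType_mul hdg, hdcyc.cycleType, hdsupp, Finset.card_insert_of_notMem hac]
    rfl

lemma numCycles_swap_mul {n : ℕ} {f : Perm (Fin n)} {a b : Fin n} (ha : f a = a)
    (hab : b ≠ a) : numCycles (Equiv.swap a b * f) + 1 = numCycles f := by
  have hsum : ∀ g : Perm (Fin n), g.cycleType.sum ≤ n := fun g => by
    rw [Equiv.Perm.sum_cycleType]
    simpa using Finset.card_le_univ g.support
  by_cases hb : f b = b
  · -- disjoint case
    have hdisj : Perm.Disjoint (Equiv.swap a b) f := by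
      intro x
      by_cases hxa : x = a
      · subst hxa; exact Or.inr ha
      · by_cases hxb : x = b
        · subst hxb; exact Or.inr hb
        · exact Or.inl (Equiv.swap_apply_of_ne_of_ne hxa hxb)
    have hct : (Equiv.swap a b * f).cycleType = 2 ::ₘ f.cycleType := by
      rw [Equiv.Perm.Disjoint.cycleType_mul hdisj, (Equiv.Perm.isCycle_swap hab.symm).cycleType,
        Equiv.Perm.card_support_swap hab.symm]
      rfl
    have hle : f.cycleType.sum + 2 ≤ n := by
      have hsub : insert a {b} ⊆ Finset.univ \ f.support := by
        intro x hx
        simp only [Finset.mem_insert, Finset.mem_singleton] at hx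
        rcases hx with rfl | rfl <;>
          simp [Finset.mem_sdiff, Equiv.Perm.notMem_support.mpr, ha, hb]
      have h2 : (insert a ({b} : Finset (Fin n))).card = 2 := by
        rw [Finset.card_insert_of_notMem (by simpa using hab.symm)]
        simp
      have h3 := Finset.card_le_card hsub
      rw [h2, Finset.card_sdiff_of_subset (Finset.subset_univ _), Finset.card_univ,
        Fintype.card_fin] at h3
      have h4 : f.support.card ≤ n := by simpa using Finset.card_le_univ f.support
      rw [Equiv.Perm.sum_cycleType]
      omega
    rw [Equiv.Perm.sum_cycleType] at hle
    unfold numCycles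
    rw [hct]
    simp only [Multiset.card_cons, Multiset.sum_cons]
    rw [← Equiv.Perm.sum_cycleType] at hle
    omega
  · obtain ⟨k, m, h1, h2⟩ := cycleType_swap_mul_of_mem ha hb hab
    have hle : (Equiv.swap a b * f).cycleType.sum ≤ n := hsum _
    unfold numCycles
    rw [h1, h2]
    rw [h2] at hle
    simp only [Multiset.card_cons, Multiset.sum_cons] at *
    omega

def succEquivNeZero (n : ℕ) : Fin n ≃ {x : Fin (n + 1) // x ≠ 0} where
  toFun i := ⟨i.succ, Fin.succ_ne_zero i⟩
  invFun x := (x : Fin (n + 1)).pred x.2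
  left_inv i := by simp
  right_inv x := by simp

lemma decomposeFin_symm_zero_eq {n : ℕ} (e : Perm (Fin n)) :
    Perm.decomposeFin.symm (0, e) = e.extendDomain (succEquivNeZero n) := by
  ext x
  refine Fin.cases ?_ (fun i => ?_) x
  · rw [Perm.decomposeFin_symm_apply_zero,
      Perm.extendDomain_apply_not_subtype _ _ (by simp)]
  · rw [Perm.decomposeFin_symm_apply_succ]
    have : (i.succ : Fin (n + 1)) = ((succEquivNeZero n) i : Fin (n + 1)) := rfl
    rw [this, Perm.extendDomain_apply_image]
    simp [succEquivNeZero]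

lemma numCycles_decomposeFin_zero {n : ℕ} (e : Perm (Fin n)) :
    numCycles (Perm.decomposeFin.symm (0, e)) = numCycles e + 1 := by
  have hct : (Perm.decomposeFin.symm (0, e)).cycleType = e.cycleType := by
    rw [decomposeFin_symm_zero_eq, Equiv.Perm.cycleType_extendDomain]
  have hle : e.cycleType.sum ≤ n := by
    rw [Equiv.Perm.sum_cycleType]
    simpa using Finset.card_le_univ e.support
  unfold numCycles
  rw [hct]
  omega

lemma decomposeFin_symm_eq_swap_mul {n : ℕ} (p : Fin (n + 1)) (e : Perm (Fin n)) :
    Perm.decomposeFin.symm (p, e) = Equiv.swap 0 p * Perm.decomposeFin.symm (0, e) := by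
  ext x
  refine Fin.cases ?_ (fun i => ?_) x
  · simp [Perm.decomposeFin_symm_apply_zero]
  · simp [Perm.decomposeFin_symm_apply_succ]

lemma numCycles_decomposeFin {n : ℕ} (p : Fin (n + 1)) (e : Perm (Fin n)) :
    numCycles (Perm.decomposeFin.symm (p, e)) =
      numCycles e + (if p = 0 then 1 else 0) := by
  by_cases hp : p = 0
  · subst hp; simp [numCycles_decomposeFin_zero]
  · have hfix : (Perm.decomposeFin.symm (0, e)) 0 = 0 := Perm.decomposeFin_symm_apply_zero 0 e
    have h := numCycles_swap_mul (f := Perm.decomposeFin.symm (0, e)) (a := 0) (b := p)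
      hfix hp
    rw [← decomposeFin_symm_eq_swap_mul] at h
    rw [numCycles_decomposeFin_zero] at h
    simp [hp]
    omega

lemma sum_pow_numCycles (n : ℕ) (w : ℂ) :
    ∑ σ : Perm (Fin n), w ^ numCycles σ = ∏ k ∈ Finset.range n, (w + k) := by
  induction n with
  | zero =>
    have huniq : ∀ σ : Perm (Fin 0), σ = 1 := fun σ => Equiv.ext fun x => x.elim0
    have h1 : ∑ σ : Perm (Fin 0), w ^ numCycles σ = ∑ _σ : Perm (Fin 0), (1 : ℂ) :=
      Finset.sum_congr rfl fun σ _ => by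
        rw [huniq σ]
        have : numCycles (1 : Perm (Fin 0)) = 0 := by
          unfold numCycles
          simp
        rw [this, pow_zero]
    rw [h1, Finset.sum_const, Finset.card_univ]
    have h2 : Fintype.card (Perm (Fin 0)) = 1 := by simp
    rw [h2]
    simp
  | succ n ih =>
    have h1 : ∑ σ : Perm (Fin (n + 1)), w ^ numCycles σ =
        ∑ x : Fin (n + 1) × Perm (Fin n), w ^ numCycles (Perm.decomposeFin.symm x) :=
      (Equiv.sum_comp Perm.decomposeFin.symm (fun σ => w ^ numCycles σ)).symm
    rw [h1, Fintype.sum_prod_type]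
    have h2 : ∀ (p : Fin (n + 1)) (e : Perm (Fin n)),
        w ^ numCycles (Perm.decomposeFin.symm (p, e)) =
          (if p = 0 then w else 1) * w ^ numCycles e := by
      intro p e
      rw [numCycles_decomposeFin]
      by_cases hp : p = 0 <;> simp [hp, pow_succ, mul_comm]
    calc ∑ p : Fin (n + 1), ∑ e : Perm (Fin n), w ^ numCycles (Perm.decomposeFin.symm (p, e))
        = ∑ p : Fin (n + 1), ∑ e : Perm (Fin n), (if p = 0 then w else 1) * w ^ numCycles e := by
          refine Finset.sum_congr rfl fun p _ => Finset.sum_congr rfl fun e _ => h2 p e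
      _ = (∑ p : Fin (n + 1), (if p = 0 then w else 1)) * ∑ e : Perm (Fin n), w ^ numCycles e := by
          rw [Finset.sum_mul]
          refine Finset.sum_congr rfl fun p _ => ?_
          rw [Finset.mul_sum]
      _ = (w + n) * ∏ k ∈ Finset.range n, (w + k) := by
          rw [ih]
          congr 1
          have : ∀ p : Fin (n + 1), (if p = 0 then w else 1) =
              1 + (if p = 0 then w - 1 else 0) := by
            intro p; split <;> ring
          rw [Finset.sum_congr rfl fun p _ => this p, Finset.sum_add_distrib,
            Finset.sum_const, Finset.sum_ite_eq' Finset.univ (0 : Fin (n + 1)) fun _ => w - 1]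
          simp
          ring
      _ = ∏ k ∈ Finset.range (n + 1), (w + k) := by
          rw [Finset.prod_range_succ]
          ring


lemma slit (z : ℂ) (hz : ‖z‖ < 1) : (1 - z) ∈ Complex.slitPlane := by
  refine Or.inl ?_
  have h1 : z.re ≤ ‖z‖ := (le_abs_self _).trans (Complex.abs_re_le_norm z)
  simp only [Complex.sub_re, Complex.one_re]
  linarith [h1.trans_lt hz]

lemma one_sub_ne (z : ℂ) (hz : ‖z‖ < 1) : (1 : ℂ) - z ≠ 0 :=
  Complex.slitPlane_ne_zero (slit z hz)

lemma hasDerivAt_F (w z : ℂ) (hz : ‖z‖ < 1) :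
    HasDerivAt (fun t : ℂ => Complex.exp (-w * Complex.log (1 - t)))
      (w * (1 - z)⁻¹ * Complex.exp (-w * Complex.log (1 - z))) z := by
  have hlog : HasDerivAt (fun t : ℂ => Complex.log (1 - t)) (-(1 - z)⁻¹) z := by
    have h1 : HasDerivAt (fun t : ℂ => 1 - t) (-1 : ℂ) z := by
      simpa using ((hasDerivAt_id z).const_sub 1)
    have h2 := (Complex.hasDerivAt_log (slit z hz)).comp z h1
    simp only [mul_neg, mul_one] at h2
    exact h2
  have := ((hlog.const_mul (-w)).cexp)
  exact this.congr_deriv (by ring)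

lemma iteratedDeriv_F (w : ℂ) (n : ℕ) :
    ∀ z : ℂ, ‖z‖ < 1 →
      iteratedDeriv n (fun t : ℂ => Complex.exp (-w * Complex.log (1 - t))) z =
        (∏ k ∈ Finset.range n, (w + k)) * ((1 - z)⁻¹) ^ n *
          Complex.exp (-w * Complex.log (1 - z)) := by
  induction n with
  | zero => intro z hz; simp
  | succ n ih =>
    intro z hz
    rw [iteratedDeriv_succ]
    have hopen : Metric.ball (0 : ℂ) 1 ∈ nhds z := by
      refine Metric.isOpen_ball.mem_nhds ?_
      simpa [Metric.mem_ball, Complex.dist_eq] using hz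
    have heq : iteratedDeriv n (fun t : ℂ => Complex.exp (-w * Complex.log (1 - t))) =ᶠ[nhds z]
        fun t => (∏ k ∈ Finset.range n, (w + k)) * (((1 - t)⁻¹) ^ n *
          Complex.exp (-w * Complex.log (1 - t))) := by
      filter_upwards [hopen] with t ht
      rw [ih t (by simpa [Metric.mem_ball, Complex.dist_eq] using ht)]
      ring
    rw [heq.deriv_eq]
    have hne : (1 : ℂ) - z ≠ 0 := one_sub_ne z hz
    have hinv : HasDerivAt (fun t : ℂ => (1 - t)⁻¹) (((1 - z)⁻¹) ^ 2) z := by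
      have h1 : HasDerivAt (fun t : ℂ => 1 - t) (-1 : ℂ) z := by
        simpa using ((hasDerivAt_id z).const_sub 1)
      have := h1.inv hne
      exact this.congr_deriv (by rw [neg_neg, inv_pow, one_div])
    have hpow : HasDerivAt (fun t : ℂ => ((1 - t)⁻¹) ^ n)
        ((n : ℂ) * ((1 - z)⁻¹) ^ (n - 1) * ((1 - z)⁻¹) ^ 2) z := hinv.pow n
    have hF := hasDerivAt_F w z hz
    have hprod := (hpow.mul hF).const_mul (∏ k ∈ Finset.range n, (w + k))
    rw [show deriv (fun t : ℂ => (∏ k ∈ Finset.range n, (w + k)) * (((1 - t)⁻¹) ^ n *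
      Complex.exp (-w * Complex.log (1 - t)))) z = _ from hprod.deriv]
    rw [Finset.prod_range_succ]
    have hkey : (n : ℂ) * ((1 - z)⁻¹) ^ (n - 1) * ((1 - z)⁻¹) ^ 2 =
        (n : ℂ) * ((1 - z)⁻¹) ^ (n + 1) := by
      cases n with
      | zero => simp
      | succ m =>
        have : m + 1 - 1 = m := rfl
        rw [this]
        ring
    rw [hkey]
    ring

theorem stmt_19 (w z : ℂ) (hz : ‖z‖ < 1) :
    HasSum (fun n : ℕ => fChar n w * z ^ n)
      (Complex.exp (-w * Complex.log (1 - z))) := by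
  have hz' : z ∈ Metric.ball (0 : ℂ) 1 := by
    simpa [Metric.mem_ball, Complex.dist_eq] using hz
  have hdiff : DifferentiableOn ℂ (fun t : ℂ => Complex.exp (-w * Complex.log (1 - t)))
      (Metric.ball 0 1) := fun t ht =>
    (hasDerivAt_F w t (by simpa [Metric.mem_ball, Complex.dist_eq] using ht)
      ).differentiableAt.differentiableWithinAt
  have H := Complex.hasSum_taylorSeries_on_ball hdiff hz'
  have hder0 : ∀ n : ℕ, iteratedDeriv n (fun t : ℂ => Complex.exp (-w * Complex.log (1 - t))) 0 =
      ∏ k ∈ Finset.range n, (w + k) := by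
    intro n
    rw [iteratedDeriv_F w n 0 (by simp)]
    simp
  have hco : ∀ n : ℕ, fChar n w * z ^ n =
      ((n.factorial : ℂ))⁻¹ • (z - 0) ^ n •
        iteratedDeriv n (fun t : ℂ => Complex.exp (-w * Complex.log (1 - t))) 0 := by
    intro n
    rw [hder0 n]
    unfold fChar
    rw [sum_pow_numCycles]
    rw [smul_eq_mul, smul_eq_mul, sub_zero]
    rw [div_eq_mul_inv]
    ring
  have : (fun n : ℕ => fChar n w * z ^ n) = fun n : ℕ =>
      ((n.factorial : ℂ))⁻¹ • (z - 0) ^ n •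
        iteratedDeriv n (fun t : ℂ => Complex.exp (-w * Complex.log (1 - t))) 0 :=
    funext hco
  rw [this]
  exact H
end
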